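/- On an asymptotically flat manifold of decay order τ, one has d(ω_{α_1α_2} ∧ (*Q^{α_1α_2})) = L_k *1 + O(r^{−(k+1)τ−2k}), where Q^{αβ} = P^{αβγδ}_{(k)} ω_γ ∧ ω_δ and * is the Hodge star; in particular the error term ω_{α_1β} ∧ ω_{βα_2} ∧ (*Q^{α_1α_2}) has pointwise norm O(r^{−(k+1)τ−2k}). -/

import Mathlib

noncomputable section

/-- The chart at infinity of the asymptotically flat end. -/
abbrev Euc (n : ℕ) := EuclideanSpace ℝ (Fin n)

/-- A differential `p`-form, represented by its coefficient functions in coordinates. -/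
abbrev Form (n p : ℕ) := Euc n → (Fin p → Fin n) → ℝ

/-- Partial derivative in the `i`-th coordinate direction. -/
def pder {n : ℕ} (i : Fin n) (f : Euc n → ℝ) (x : Euc n) : ℝ :=
  fderiv ℝ f x (EuclideanSpace.single i 1)

/-- `f = O(r^{-τ})` as `r = |x| → ∞`. -/
def bigO {n : ℕ} (f : Euc n → ℝ) (τ : ℝ) : Prop :=
  ∃ C R₀ : ℝ, ∀ x : Euc n, R₀ ≤ ‖x‖ → |f x| ≤ C * ‖x‖ ^ (-τ)

/-- Wedge product. -/
def wedge {n p q : ℕ} (a : Form n p) (b : Form n q) : Form n (p + q) :=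
  fun x v => ((p.factorial * q.factorial : ℕ) : ℝ)⁻¹ * ∑ σ : Equiv.Perm (Fin (p + q)),
    ((Equiv.Perm.sign σ : ℤ) : ℝ)
      * a x (fun i => v (σ (Fin.castAdd q i)))
      * b x (fun i => v (σ (Fin.natAdd p i)))

/-- Exterior derivative, componentwise. -/
def extd {n p : ℕ} (a : Form n p) : Form n (p + 1) :=
  fun x v => ∑ i : Fin (p + 1),
    (-1 : ℝ) ^ (i : ℕ) * pder (v i) (fun y => a y (v ∘ i.succAbove)) x

/-- Reinterpret a `p`-form as a `q`-form along a proof `p = q`. -/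
def castForm {n p q : ℕ} (h : p = q) (f : Form n p) : Form n q :=
  fun x v => f x (v ∘ Fin.cast h)

-- basic pder lemmas
theorem pder_congr {n : ℕ} (i : Fin n) {f g : Euc n → ℝ} (h : ∀ y, f y = g y) (x : Euc n) :
    pder i f x = pder i g x := by
  have : f = g := funext h
  rw [this]

theorem pder_sum {n : ℕ} (i : Fin n) {ι : Type*} (s : Finset ι) (f : ι → Euc n → ℝ)
    (x : Euc n)
    (hx : ∀ j ∈ s, DifferentiableAt ℝ (f j) x) :
    pder i (fun y => ∑ j ∈ s, f j y) x = ∑ j ∈ s, pder i (f j) x := by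
  unfold pder
  rw [fderiv_fun_sum hx]
  simp

theorem pder_const_mul {n : ℕ} (i : Fin n) (c : ℝ) (f : Euc n → ℝ) (x : Euc n)
    (hf : DifferentiableAt ℝ f x) :
    pder i (fun y => c * f y) x = c * pder i f x := by
  unfold pder
  rw [fderiv_const_mul hf]
  simp

theorem pder_mul {n : ℕ} (i : Fin n) (f g : Euc n → ℝ) (x : Euc n)
    (hf : DifferentiableAt ℝ f x) (hg : DifferentiableAt ℝ g x) :
    pder i (fun y => f y * g y) x = pder i f x * g x + f x * pder i g x := by
  unfold pder
  rw [fderiv_fun_mul hf hg]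
  simp only [ContinuousLinearMap.add_apply, ContinuousLinearMap.smul_apply, smul_eq_mul]
  ring

-- extension of a permutation of Fin N to Fin (N+1) fixing i
def ext1 {N : ℕ} (i : Fin (N + 1)) (σ : Equiv.Perm (Fin N)) : Equiv.Perm (Fin (N + 1)) :=
  (finSuccEquiv' i).symm.permCongr σ.optionCongr

@[simp] theorem ext1_self {N : ℕ} (i : Fin (N + 1)) (σ : Equiv.Perm (Fin N)) :
    ext1 i σ i = i := by
  simp [ext1, Equiv.permCongr_apply, finSuccEquiv'_at]

@[simp] theorem ext1_succAbove {N : ℕ} (i : Fin (N + 1)) (σ : Equiv.Perm (Fin N)) (j : Fin N) :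
    ext1 i σ (i.succAbove j) = i.succAbove (σ j) := by
  simp [ext1, Equiv.permCongr_apply, finSuccEquiv'_succAbove]

@[simp] theorem ext1_sign {N : ℕ} (i : Fin (N + 1)) (σ : Equiv.Perm (Fin N)) :
    Equiv.Perm.sign (ext1 i σ) = Equiv.Perm.sign σ := by
  rw [ext1, Equiv.Perm.sign_permCongr, Equiv.optionCongr_sign]

-- the insertion bijection Φ
def Phi {N : ℕ} (p : Fin (N + 1) × Equiv.Perm (Fin N)) : Equiv.Perm (Fin (N + 1)) :=
  p.1.cycleRange⁻¹ * ext1 0 p.2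

@[simp] theorem Phi_zero {N : ℕ} (i : Fin (N + 1)) (σ : Equiv.Perm (Fin N)) :
    Phi (i, σ) 0 = i := by
  have h0 : ext1 (0 : Fin (N+1)) σ 0 = 0 := ext1_self _ _
  simp [Phi, Equiv.Perm.mul_apply, h0]

@[simp] theorem Phi_succ {N : ℕ} (i : Fin (N + 1)) (σ : Equiv.Perm (Fin N)) (j : Fin N) :
    Phi (i, σ) j.succ = i.succAbove (σ j) := by
  have h1 : ext1 (0 : Fin (N+1)) σ j.succ = (σ j).succ := by
    have := ext1_succAbove (0 : Fin (N+1)) σ j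
    simpa [Fin.succAbove_zero] using this
  simp [Phi, Equiv.Perm.mul_apply, h1]

@[simp] theorem Phi_sign {N : ℕ} (i : Fin (N + 1)) (σ : Equiv.Perm (Fin N)) :
    Equiv.Perm.sign (Phi (i, σ)) = (-1) ^ (i : ℕ) * Equiv.Perm.sign σ := by
  rw [Phi, map_mul, map_inv, Fin.sign_cycleRange, ext1_sign, ← inv_pow, inv_neg, inv_one]

theorem Phi_bijective {N : ℕ} : Function.Bijective (Phi (N := N)) := by
  rw [Fintype.bijective_iff_injective_and_card]
  constructor
  · rintro ⟨i, σ⟩ ⟨i', σ'⟩ h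
    have hi : i = i' := by
      have := congrArg (fun ρ => ρ 0) h
      simpa using this
    subst hi
    have hσ : σ = σ' := by
      apply Equiv.ext; intro j
      have h2 := congrArg (fun ρ => ρ j.succ) h
      simp only [Phi_succ] at h2
      exact Fin.succAbove_right_injective h2
    rw [hσ]
  · simp [Fintype.card_perm, Fintype.card_prod, Nat.factorial_succ]

/-- the canonical middle expression -/
def AA {n m : ℕ} (a : Form n 1) (b : Form n m) (x : Euc n) (v : Fin (m + 2) → Fin n) : ℝ :=
  ∑ ρ : Equiv.Perm (Fin (m + 2)), ((Equiv.Perm.sign ρ : ℤ) : ℝ)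
    * pder (v (ρ 0)) (fun y => a y (fun _ => v (ρ 1))) x
    * b x (fun j => v (ρ j.succ.succ))

theorem permCongr_cast_apply {p q : ℕ} (h : p = q) (ρ' : Equiv.Perm (Fin p)) (t : Fin p) :
    ((finCongr h).permCongr ρ') (Fin.cast h t) = Fin.cast h (ρ' t) := by
  simp [Equiv.permCongr_apply]

theorem succ_succ_ne_zero {m : ℕ} (j : Fin m) : (j.succ.succ : Fin (m + 2)) ≠ 0 :=
  Fin.succ_ne_zero _

theorem succ_succ_ne_one {m : ℕ} (j : Fin m) : (j.succ.succ : Fin (m + 2)) ≠ 1 := by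
  apply Fin.ne_of_val_ne
  simp [Fin.val_succ]

theorem keyB {n m : ℕ} (a : Form n 1) (b : Form n m)
    (x : Euc n) (v : Fin (m + 2) → Fin n) (h₂ : 2 + m = m + 2) :
    castForm h₂ (wedge (extd a) b) x v = ((m.factorial : ℕ) : ℝ)⁻¹ * AA a b x v := by
  rw [castForm, wedge]
  -- reindex the permutation sum to Perm (Fin (m+2))
  have hre : ∑ ρ' : Equiv.Perm (Fin (2 + m)),
      ((Equiv.Perm.sign ρ' : ℤ) : ℝ)
        * extd a x (fun t => (v ∘ Fin.cast h₂) (ρ' (Fin.castAdd m t)))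
        * b x (fun j => (v ∘ Fin.cast h₂) (ρ' (Fin.natAdd 2 j)))
    = ∑ ρ : Equiv.Perm (Fin (m + 2)),
      ((Equiv.Perm.sign ρ : ℤ) : ℝ)
        * extd a x (fun t => v (ρ (Fin.cast h₂ (Fin.castAdd m t))))
        * b x (fun j => v (ρ (Fin.cast h₂ (Fin.natAdd 2 j)))) := by
    apply Fintype.sum_equiv ((finCongr h₂).permCongr)
    intro ρ'
    have e1 : (fun t : Fin 2 => (v ∘ Fin.cast h₂) (ρ' (Fin.castAdd m t)))
        = fun t => v (((finCongr h₂).permCongr ρ') (Fin.cast h₂ (Fin.castAdd m t))) := by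
      funext t; simp [permCongr_cast_apply]
    have e2 : (fun j : Fin m => (v ∘ Fin.cast h₂) (ρ' (Fin.natAdd 2 j)))
        = fun j => v (((finCongr h₂).permCongr ρ') (Fin.cast h₂ (Fin.natAdd 2 j))) := by
      funext j; simp [permCongr_cast_apply]
    rw [Equiv.Perm.sign_permCongr, e1, e2]
  rw [hre]
  have hterm : ∀ ρ : Equiv.Perm (Fin (m + 2)),
      ((Equiv.Perm.sign ρ : ℤ) : ℝ)
        * extd a x (fun t => v (ρ (Fin.cast h₂ (Fin.castAdd m t))))
        * b x (fun j => v (ρ (Fin.cast h₂ (Fin.natAdd 2 j))))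
      = ((Equiv.Perm.sign ρ : ℤ) : ℝ)
          * pder (v (ρ 0)) (fun y => a y (fun _ => v (ρ 1))) x
          * b x (fun j => v (ρ j.succ.succ))
        - ((Equiv.Perm.sign ρ : ℤ) : ℝ)
          * pder (v (ρ 1)) (fun y => a y (fun _ => v (ρ 0))) x
          * b x (fun j => v (ρ j.succ.succ)) := by
    intro ρ
    have hb : (fun j : Fin m => v (ρ (Fin.cast h₂ (Fin.natAdd 2 j))))
        = fun j => v (ρ j.succ.succ) := by
      funext j; congr 2; apply Fin.ext; simp
    have h0 : Fin.cast h₂ (Fin.castAdd m (0 : Fin 2)) = (0 : Fin (m + 2)) := by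
      apply Fin.ext; simp
    have h1 : Fin.cast h₂ (Fin.castAdd m (1 : Fin 2)) = (1 : Fin (m + 2)) := by
      apply Fin.ext; simp
    have hex : extd a x (fun t => v (ρ (Fin.cast h₂ (Fin.castAdd m t))))
        = pder (v (ρ 0)) (fun y => a y (fun _ => v (ρ 1))) x
          - pder (v (ρ 1)) (fun y => a y (fun _ => v (ρ 0))) x := by
      rw [show extd a x (fun t => v (ρ (Fin.cast h₂ (Fin.castAdd m t))))
            = ∑ i : Fin 2, (-1 : ℝ) ^ (i : ℕ)
              * pder (v (ρ (Fin.cast h₂ (Fin.castAdd m i))))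
                (fun y => a y ((fun t : Fin 2 => v (ρ (Fin.cast h₂ (Fin.castAdd m t))))
                  ∘ Fin.succAbove i)) x from rfl]
      rw [Fin.sum_univ_two]
      have e0 : ((fun t : Fin 2 => v (ρ (Fin.cast h₂ (Fin.castAdd m t)))) ∘ Fin.succAbove 0)
          = fun _ : Fin 1 => v (ρ (Fin.cast h₂ (Fin.castAdd m (1 : Fin 2)))) := by
        funext t
        have : t = 0 := Subsingleton.elim t 0
        subst this
        simp only [Function.comp_apply]
        congr 2
      have e1 : ((fun t : Fin 2 => v (ρ (Fin.cast h₂ (Fin.castAdd m t)))) ∘ Fin.succAbove 1)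
          = fun _ : Fin 1 => v (ρ (Fin.cast h₂ (Fin.castAdd m (0 : Fin 2)))) := by
        funext t
        have : t = 0 := Subsingleton.elim t 0
        subst this
        simp only [Function.comp_apply]
        congr 2
      rw [e0, e1, h0, h1]
      norm_num [sub_eq_add_neg]
    rw [hex, hb]
    ring
  rw [Finset.sum_congr rfl (fun ρ _ => hterm ρ), Finset.sum_sub_distrib]
  have hswap : ∑ ρ : Equiv.Perm (Fin (m + 2)),
      ((Equiv.Perm.sign ρ : ℤ) : ℝ)
        * pder (v (ρ 1)) (fun y => a y (fun _ => v (ρ 0))) x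
        * b x (fun j => v (ρ j.succ.succ))
      = -AA a b x v := by
    rw [AA, ← Finset.sum_neg_distrib]
    apply Fintype.sum_equiv (Equiv.mulRight (Equiv.swap (0 : Fin (m + 2)) 1))
    intro ρ
    simp only [Equiv.coe_mulRight]
    have hs : ((Equiv.Perm.sign (ρ * Equiv.swap (0 : Fin (m + 2)) 1) : ℤ) : ℝ)
        = -((Equiv.Perm.sign ρ : ℤ) : ℝ) := by
      rw [map_mul, Equiv.Perm.sign_swap (by simp : (0 : Fin (m + 2)) ≠ 1)]
      push_cast; ring
    have hz : (ρ * Equiv.swap (0 : Fin (m + 2)) 1) 0 = ρ 1 := by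
      simp [Equiv.Perm.mul_apply]
    have ho : (ρ * Equiv.swap (0 : Fin (m + 2)) 1) 1 = ρ 0 := by
      simp [Equiv.Perm.mul_apply]
    have hj : ∀ j : Fin m, (ρ * Equiv.swap (0 : Fin (m + 2)) 1) j.succ.succ = ρ j.succ.succ := by
      intro j
      simp only [Equiv.Perm.mul_apply]
      rw [Equiv.swap_apply_of_ne_of_ne (succ_succ_ne_zero j) (succ_succ_ne_one j)]
    rw [hs, hz, ho]
    have hbb : (fun j : Fin m => v ((ρ * Equiv.swap (0 : Fin (m + 2)) 1) j.succ.succ))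
        = fun j => v (ρ j.succ.succ) := by
      funext j; rw [hj j]
    rw [hbb]
    ring
  rw [hswap, AA]
  have hfac : ((Nat.factorial 2 * Nat.factorial m : ℕ) : ℝ)⁻¹
      = (2 : ℝ)⁻¹ * ((Nat.factorial m : ℕ) : ℝ)⁻¹ := by
    rw [show Nat.factorial 2 = 2 from rfl, Nat.cast_mul, mul_inv]
    norm_num
  rw [hfac]
  ring

theorem succAbove_val {N : ℕ} (i : Fin (N + 1)) (j : Fin N) :
    ((i.succAbove j : Fin (N + 1)) : ℕ) = if (j : ℕ) < (i : ℕ) then (j : ℕ) else (j : ℕ) + 1 := by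
  rcases lt_or_ge ((j.castSucc : Fin (N + 1)) : ℕ) (i : ℕ) with h | h
  · rw [Fin.succAbove_of_castSucc_lt _ _ (by rwa [Fin.lt_def])]
    simp only [Fin.coe_castSucc] at h ⊢
    rw [if_pos h]
  · rw [Fin.succAbove_of_le_castSucc _ _ (by rwa [Fin.le_def])]
    simp only [Fin.coe_castSucc] at h
    rw [Fin.val_succ, if_neg (by omega)]

theorem zero_eq_succAbove_one {m : ℕ} : (0 : Fin (m + 2)) = (1 : Fin (m + 2)).succAbove 0 := by
  apply Fin.ext
  rw [succAbove_val]
  simp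

theorem succ_succ_eq_succAbove_one {m : ℕ} (j : Fin m) :
    (j.succ.succ : Fin (m + 2)) = (1 : Fin (m + 2)).succAbove j.succ := by
  apply Fin.ext
  rw [succAbove_val]
  simp

theorem cast_succAbove {p q : ℕ} (h : p = q) (h' : p + 1 = q + 1) (i : Fin (p + 1)) (j : Fin p) :
    Fin.cast h' (i.succAbove j) = (Fin.cast h' i).succAbove (Fin.cast h j) := by
  apply Fin.ext
  rw [Fin.coe_cast, succAbove_val, succAbove_val]
  simp

-- differentiability of wedge coefficients
theorem diffAt_wedge {n p q : ℕ} (a : Form n p) (b : Form n q)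
    (ha : ∀ w, ContDiff ℝ (⊤ : ℕ∞) (fun x => a x w)) (hb : ∀ w, ContDiff ℝ (⊤ : ℕ∞) (fun x => b x w))
    (u : Fin (p + q) → Fin n) (x : Euc n) :
    DifferentiableAt ℝ (fun y => wedge a b y u) x := by
  have : (fun y => wedge a b y u)
      = fun y => ((p.factorial * q.factorial : ℕ) : ℝ)⁻¹ * ∑ σ : Equiv.Perm (Fin (p + q)),
        ((Equiv.Perm.sign σ : ℤ) : ℝ)
          * a y (fun i => u (σ (Fin.castAdd q i)))
          * b y (fun i => u (σ (Fin.natAdd p i))) := rfl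
  rw [this]
  apply DifferentiableAt.const_mul
  apply DifferentiableAt.fun_sum
  intro σ _
  exact (((((ha _).differentiable (by simp)).differentiableAt).const_mul _).mul
    (((hb _).differentiable (by simp)).differentiableAt))

theorem pder_wedge {n p q : ℕ} (a : Form n p) (b : Form n q)
    (ha : ∀ w, ContDiff ℝ (⊤ : ℕ∞) (fun x => a x w)) (hb : ∀ w, ContDiff ℝ (⊤ : ℕ∞) (fun x => b x w))
    (d : Fin n) (u : Fin (p + q) → Fin n) (x : Euc n) :
    pder d (fun y => wedge a b y u) x
      = ((p.factorial * q.factorial : ℕ) : ℝ)⁻¹ * ∑ σ : Equiv.Perm (Fin (p + q)),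
        ((Equiv.Perm.sign σ : ℤ) : ℝ)
          * (pder d (fun y => a y (fun i => u (σ (Fin.castAdd q i)))) x
              * b x (fun i => u (σ (Fin.natAdd p i)))
            + a x (fun i => u (σ (Fin.castAdd q i)))
              * pder d (fun y => b y (fun i => u (σ (Fin.natAdd p i)))) x) := by
  have h1 : (fun y => wedge a b y u)
      = fun y => ((p.factorial * q.factorial : ℕ) : ℝ)⁻¹ * ∑ σ : Equiv.Perm (Fin (p + q)),
        ((Equiv.Perm.sign σ : ℤ) : ℝ)
          * (a y (fun i => u (σ (Fin.castAdd q i)))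
          * b y (fun i => u (σ (Fin.natAdd p i)))) := by
    funext y
    rw [wedge]
    congr 1
    exact Finset.sum_congr rfl (fun σ _ => by ring)
  rw [h1]
  have hd : ∀ σ : Equiv.Perm (Fin (p + q)), DifferentiableAt ℝ
      (fun y => a y (fun i => u (σ (Fin.castAdd q i)))
        * b y (fun i => u (σ (Fin.natAdd p i)))) x :=
    fun σ => ((((ha _).differentiable (by simp)).differentiableAt).mul
      (((hb _).differentiable (by simp)).differentiableAt))
  rw [pder_const_mul _ _ _ _ (DifferentiableAt.fun_sum (fun σ _ => (hd σ).const_mul _))]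
  congr 1
  rw [pder_sum _ _ _ _ (fun σ _ => (hd σ).const_mul _)]
  apply Finset.sum_congr rfl
  intro σ _
  rw [pder_const_mul _ _ _ _ (hd σ),
    pder_mul _ _ _ _ (((ha _).differentiable (by simp)).differentiableAt)
      (((hb _).differentiable (by simp)).differentiableAt)]

theorem sign_cast_mul {X : Type*} [DecidableEq X] [Fintype X] (σ π : Equiv.Perm X) :
    ((Equiv.Perm.sign (σ * π) : ℤ) : ℝ)
      = ((Equiv.Perm.sign σ : ℤ) : ℝ) * ((Equiv.Perm.sign π : ℤ) : ℝ) := by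
  rw [map_mul]
  push_cast
  ring

theorem phi_reindex {N : ℕ} (G : Equiv.Perm (Fin (N + 1)) → ℝ) :
    ∑ p : Fin (N + 1) × Equiv.Perm (Fin N), G (Phi p) = ∑ ρ : Equiv.Perm (Fin (N + 1)), G ρ :=
  Fintype.sum_bijective Phi Phi_bijective _ _ (fun _ => rfl)

theorem keyS {n m : ℕ} (a : Form n 1) (b : Form n m)
    (hdb : extd b = 0) (x : Euc n) (v : Fin (m + 2) → Fin n) :
    ∑ ρ : Equiv.Perm (Fin (m + 2)), ((Equiv.Perm.sign ρ : ℤ) : ℝ)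
      * (a x (fun _ : Fin 1 => v (ρ 1))
        * pder (v (ρ 0)) (fun y => b y (fun j => v (ρ j.succ.succ))) x) = 0 := by
  set S := ∑ ρ : Equiv.Perm (Fin (m + 2)), ((Equiv.Perm.sign ρ : ℤ) : ℝ)
      * (a x (fun _ : Fin 1 => v (ρ 1))
        * pder (v (ρ 0)) (fun y => b y (fun j => v (ρ j.succ.succ))) x) with hS
  have hl : ∀ l : Fin (m + 1),
      (∑ ρ : Equiv.Perm (Fin (m + 2)), ((Equiv.Perm.sign ρ : ℤ) : ℝ)
        * ((-1 : ℝ) ^ (l : ℕ)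
          * (a x (fun _ : Fin 1 => v (ρ 1))
            * pder (v (ρ ((1 : Fin (m + 2)).succAbove l)))
              (fun y => b y ((fun t => v (ρ ((1 : Fin (m + 2)).succAbove t)))
                ∘ Fin.succAbove l)) x))) = S := by
    intro l
    rw [hS]
    apply Fintype.sum_equiv (Equiv.mulRight (ext1 (1 : Fin (m + 2)) (l.cycleRange)⁻¹))
    intro ρ
    simp only [Equiv.coe_mulRight]
    set π := ext1 (1 : Fin (m + 2)) (l.cycleRange)⁻¹ with hπ
    have hκ0 : (l.cycleRange)⁻¹ 0 = l := by
      rw [show (l.cycleRange)⁻¹ 0 = l.cycleRange.symm 0 from rfl, Fin.cycleRange_symm_zero]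
    have hκs : ∀ j : Fin m, (l.cycleRange)⁻¹ j.succ = l.succAbove j := by
      intro j
      rw [show (l.cycleRange)⁻¹ j.succ = l.cycleRange.symm j.succ from rfl,
        Fin.cycleRange_symm_succ]
    have hsignπ : ((Equiv.Perm.sign π : ℤ) : ℝ) = (-1 : ℝ) ^ (l : ℕ) := by
      rw [hπ, ext1_sign, map_inv, Fin.sign_cycleRange, ← inv_pow, inv_neg, inv_one]
      push_cast
      ring
    have h1 : (ρ * π) 1 = ρ 1 := by
      simp only [Equiv.Perm.mul_apply, hπ, ext1_self]
    have h0 : (ρ * π) 0 = ρ ((1 : Fin (m + 2)).succAbove l) := by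
      simp only [Equiv.Perm.mul_apply]
      congr 1
      rw [zero_eq_succAbove_one, hπ, ext1_succAbove, hκ0]
    have hj : ∀ j : Fin m, (ρ * π) j.succ.succ
        = ρ ((1 : Fin (m + 2)).succAbove (l.succAbove j)) := by
      intro j
      simp only [Equiv.Perm.mul_apply]
      congr 1
      rw [succ_succ_eq_succAbove_one, hπ, ext1_succAbove, hκs]
    rw [sign_cast_mul, hsignπ, h1, h0]
    have hbarg : (fun j : Fin m => v ((ρ * π) j.succ.succ))
        = ((fun t => v (ρ ((1 : Fin (m + 2)).succAbove t))) ∘ Fin.succAbove l) := by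
      funext j
      simp only [Function.comp_apply]
      rw [hj j]
    rw [hbarg]
    ring
  have hsum : (((m : ℕ) + 1 : ℕ) : ℝ) * S = 0 := by
    have h1 : ∑ _l : Fin (m + 1), S = (((m : ℕ) + 1 : ℕ) : ℝ) * S := by
      rw [Finset.sum_const, Finset.card_univ, Fintype.card_fin, nsmul_eq_mul]
    rw [← h1]
    rw [Finset.sum_congr rfl (fun l _ => (hl l).symm), Finset.sum_comm]
    apply Finset.sum_eq_zero
    intro ρ _
    have hextd : ∑ l : Fin (m + 1), (-1 : ℝ) ^ (l : ℕ)
        * pder (v (ρ ((1 : Fin (m + 2)).succAbove l)))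
          (fun y => b y ((fun t => v (ρ ((1 : Fin (m + 2)).succAbove t)))
            ∘ Fin.succAbove l)) x = 0 := by
      have h := congrFun (congrFun hdb x) (fun t => v (ρ ((1 : Fin (m + 2)).succAbove t)))
      rw [extd] at h
      simpa using h
    calc ∑ l : Fin (m + 1), ((Equiv.Perm.sign ρ : ℤ) : ℝ)
          * ((-1 : ℝ) ^ (l : ℕ)
            * (a x (fun _ : Fin 1 => v (ρ 1))
              * pder (v (ρ ((1 : Fin (m + 2)).succAbove l)))
                (fun y => b y ((fun t => v (ρ ((1 : Fin (m + 2)).succAbove t)))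
                  ∘ Fin.succAbove l)) x))
        = ((Equiv.Perm.sign ρ : ℤ) : ℝ) * (a x (fun _ : Fin 1 => v (ρ 1)))
          * ∑ l : Fin (m + 1), (-1 : ℝ) ^ (l : ℕ)
            * pder (v (ρ ((1 : Fin (m + 2)).succAbove l)))
              (fun y => b y ((fun t => v (ρ ((1 : Fin (m + 2)).succAbove t)))
                ∘ Fin.succAbove l)) x := by
          rw [Finset.mul_sum]
          exact Finset.sum_congr rfl (fun l _ => by ring)
      _ = 0 := by rw [hextd, mul_zero]
  have hne : (((m : ℕ) + 1 : ℕ) : ℝ) ≠ 0 := by positivity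
  exact (mul_eq_zero.mp hsum).resolve_left hne

theorem keyA {n m : ℕ} (a : Form n 1) (b : Form n m)
    (ha : ∀ w, ContDiff ℝ (⊤ : ℕ∞) (fun x => a x w)) (hb : ∀ w, ContDiff ℝ (⊤ : ℕ∞) (fun x => b x w))
    (hdb : extd b = 0) (x : Euc n) (v : Fin (m + 2) → Fin n) (h₁ : 1 + m + 1 = m + 2) :
    castForm h₁ (extd (wedge a b)) x v = ((m.factorial : ℕ) : ℝ)⁻¹ * AA a b x v := by
  have hm : 1 + m = m + 1 := by omega
  -- Step 1: expand and reindex everything to Fin (m+2) / Perm (Fin (m+1))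
  have big : castForm h₁ (extd (wedge a b)) x v
      = ∑ i : Fin (m + 2), (-1 : ℝ) ^ (i : ℕ)
        * (((Nat.factorial 1 * Nat.factorial m : ℕ) : ℝ)⁻¹
          * ∑ σ : Equiv.Perm (Fin (m + 1)), ((Equiv.Perm.sign σ : ℤ) : ℝ)
            * (pder (v i) (fun y => a y (fun _ : Fin 1 => v (i.succAbove (σ 0)))) x
                * b x (fun j => v (i.succAbove (σ j.succ)))
              + a x (fun _ : Fin 1 => v (i.succAbove (σ 0)))
                * pder (v i) (fun y => b y (fun j => v (i.succAbove (σ j.succ)))) x)) := by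
    rw [castForm, extd]
    apply Fintype.sum_equiv (finCongr h₁)
    intro i'
    rw [pder_wedge a b ha hb]
    simp only [finCongr_apply, Fin.coe_cast, Function.comp_apply]
    congr 1
    congr 1
    apply Fintype.sum_equiv ((finCongr hm).permCongr)
    intro σ'
    rw [Equiv.Perm.sign_permCongr]
    congr 1
    have harg1 : (fun t : Fin 1 => v (Fin.cast h₁ (i'.succAbove (σ' (Fin.castAdd m t)))))
        = fun _ : Fin 1 => v ((Fin.cast h₁ i').succAbove
            (((finCongr hm).permCongr σ') 0)) := by
      funext t
      have ht : t = 0 := Subsingleton.elim t 0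
      subst ht
      apply congrArg
      rw [cast_succAbove hm h₁]
      apply congrArg
      rw [show (0 : Fin (m + 1)) = Fin.cast hm (Fin.castAdd m 0) from by apply Fin.ext; simp,
        permCongr_cast_apply]
    have harg2 : (fun j : Fin m => v (Fin.cast h₁ (i'.succAbove (σ' (Fin.natAdd 1 j)))))
        = fun j : Fin m => v ((Fin.cast h₁ i').succAbove
            (((finCongr hm).permCongr σ') j.succ)) := by
      funext j
      apply congrArg
      rw [cast_succAbove hm h₁]
      apply congrArg
      rw [show (j.succ : Fin (m + 1)) = Fin.cast hm (Fin.natAdd 1 j) from by apply Fin.ext; simp [Nat.add_comm],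
        permCongr_cast_apply]
    rw [harg1, harg2]
  rw [big]
  -- Step 2: split into the two Leibniz terms
  have hsplit : ∀ i : Fin (m + 2),
      (-1 : ℝ) ^ (i : ℕ)
        * (((Nat.factorial 1 * Nat.factorial m : ℕ) : ℝ)⁻¹
          * ∑ σ : Equiv.Perm (Fin (m + 1)), ((Equiv.Perm.sign σ : ℤ) : ℝ)
            * (pder (v i) (fun y => a y (fun _ : Fin 1 => v (i.succAbove (σ 0)))) x
                * b x (fun j => v (i.succAbove (σ j.succ)))
              + a x (fun _ : Fin 1 => v (i.succAbove (σ 0)))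
                * pder (v i) (fun y => b y (fun j => v (i.succAbove (σ j.succ)))) x))
      = ((m.factorial : ℕ) : ℝ)⁻¹
        * ((-1 : ℝ) ^ (i : ℕ) * ∑ σ : Equiv.Perm (Fin (m + 1)),
            ((Equiv.Perm.sign σ : ℤ) : ℝ)
              * (pder (v i) (fun y => a y (fun _ : Fin 1 => v (i.succAbove (σ 0)))) x
                * b x (fun j => v (i.succAbove (σ j.succ))))
          + (-1 : ℝ) ^ (i : ℕ) * ∑ σ : Equiv.Perm (Fin (m + 1)),
            ((Equiv.Perm.sign σ : ℤ) : ℝ)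
              * (a x (fun _ : Fin 1 => v (i.succAbove (σ 0)))
                * pder (v i) (fun y => b y (fun j => v (i.succAbove (σ j.succ)))) x)) := by
    intro i
    rw [show (∑ σ : Equiv.Perm (Fin (m + 1)), ((Equiv.Perm.sign σ : ℤ) : ℝ)
        * (pder (v i) (fun y => a y (fun _ : Fin 1 => v (i.succAbove (σ 0)))) x
            * b x (fun j => v (i.succAbove (σ j.succ)))
          + a x (fun _ : Fin 1 => v (i.succAbove (σ 0)))
            * pder (v i) (fun y => b y (fun j => v (i.succAbove (σ j.succ)))) x))
      = (∑ σ : Equiv.Perm (Fin (m + 1)), ((Equiv.Perm.sign σ : ℤ) : ℝ)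
          * (pder (v i) (fun y => a y (fun _ : Fin 1 => v (i.succAbove (σ 0)))) x
            * b x (fun j => v (i.succAbove (σ j.succ)))))
        + ∑ σ : Equiv.Perm (Fin (m + 1)), ((Equiv.Perm.sign σ : ℤ) : ℝ)
          * (a x (fun _ : Fin 1 => v (i.succAbove (σ 0)))
            * pder (v i) (fun y => b y (fun j => v (i.succAbove (σ j.succ)))) x)
      from by
        rw [← Finset.sum_add_distrib]
        exact Finset.sum_congr rfl (fun σ _ => by ring)]
    rw [Nat.factorial_one, one_mul]
    ring
  rw [Finset.sum_congr rfl (fun i _ => hsplit i), ← Finset.mul_sum, Finset.sum_add_distrib]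
  -- Step 3: first double sum is AA, via the insertion bijection
  have hEA : ∑ i : Fin (m + 2), (-1 : ℝ) ^ (i : ℕ)
      * ∑ σ : Equiv.Perm (Fin (m + 1)), ((Equiv.Perm.sign σ : ℤ) : ℝ)
        * (pder (v i) (fun y => a y (fun _ : Fin 1 => v (i.succAbove (σ 0)))) x
          * b x (fun j => v (i.succAbove (σ j.succ))))
      = AA a b x v := by
    rw [AA, ← phi_reindex (fun ρ => ((Equiv.Perm.sign ρ : ℤ) : ℝ)
      * pder (v (ρ 0)) (fun y => a y (fun _ : Fin 1 => v (ρ 1))) x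
      * b x (fun j => v (ρ j.succ.succ))), Fintype.sum_prod_type]
    apply Finset.sum_congr rfl
    intro i _
    rw [Finset.mul_sum]
    apply Finset.sum_congr rfl
    intro σ _
    have hsg : ((Equiv.Perm.sign (Phi (i, σ)) : ℤ) : ℝ)
        = (-1 : ℝ) ^ (i : ℕ) * ((Equiv.Perm.sign σ : ℤ) : ℝ) := by
      rw [Phi_sign]
      push_cast
      ring
    have hz : Phi (i, σ) 0 = i := Phi_zero i σ
    have ho : Phi (i, σ) 1 = i.succAbove (σ 0) := by
      rw [← Fin.succ_zero_eq_one, Phi_succ]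
    have hbarg : (fun j : Fin m => v (Phi (i, σ) j.succ.succ))
        = fun j => v (i.succAbove (σ j.succ)) := by
      funext j
      rw [Phi_succ]
    rw [hsg, hz, ho, hbarg]
    ring
  -- Step 4: second double sum vanishes
  have hEB : ∑ i : Fin (m + 2), (-1 : ℝ) ^ (i : ℕ)
      * ∑ σ : Equiv.Perm (Fin (m + 1)), ((Equiv.Perm.sign σ : ℤ) : ℝ)
        * (a x (fun _ : Fin 1 => v (i.succAbove (σ 0)))
          * pder (v i) (fun y => b y (fun j => v (i.succAbove (σ j.succ)))) x)
      = 0 := by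
    rw [← keyS a b hdb x v,
      ← phi_reindex (fun ρ => ((Equiv.Perm.sign ρ : ℤ) : ℝ)
        * (a x (fun _ : Fin 1 => v (ρ 1))
          * pder (v (ρ 0)) (fun y => b y (fun j => v (ρ j.succ.succ))) x)),
      Fintype.sum_prod_type]
    apply Finset.sum_congr rfl
    intro i _
    rw [Finset.mul_sum]
    apply Finset.sum_congr rfl
    intro σ _
    have hsg : ((Equiv.Perm.sign (Phi (i, σ)) : ℤ) : ℝ)
        = (-1 : ℝ) ^ (i : ℕ) * ((Equiv.Perm.sign σ : ℤ) : ℝ) := by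
      rw [Phi_sign]
      push_cast
      ring
    have hz : Phi (i, σ) 0 = i := Phi_zero i σ
    have ho : Phi (i, σ) 1 = i.succAbove (σ 0) := by
      rw [← Fin.succ_zero_eq_one, Phi_succ]
    have hbarg : (fun j : Fin m => v (Phi (i, σ) j.succ.succ))
        = fun j => v (i.succAbove (σ j.succ)) := by
      funext j
      rw [Phi_succ]
    rw [hsg, hz, ho, hbarg]
    ring
  rw [hEA, hEB, add_zero]

theorem key {n m : ℕ} (a : Form n 1) (b : Form n m)
    (ha : ∀ w, ContDiff ℝ (⊤ : ℕ∞) (fun x => a x w)) (hb : ∀ w, ContDiff ℝ (⊤ : ℕ∞) (fun x => b x w))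
    (hdb : extd b = 0) (x : Euc n) (v : Fin (m + 2) → Fin n)
    (h₁ : 1 + m + 1 = m + 2) (h₂ : 2 + m = m + 2) :
    castForm h₁ (extd (wedge a b)) x v = castForm h₂ (wedge (extd a) b) x v := by
  rw [keyA a b ha hb hdb x v h₁, keyB a b x v h₂]

-- ### bigO lemmas
theorem bigO_congr {n : ℕ} {f g : Euc n → ℝ} (h : ∀ x, f x = g x) {τ : ℝ} (hf : bigO f τ) :
    bigO g τ := by
  have : f = g := funext h
  rwa [← this]

theorem bigO_zero {n : ℕ} (τ : ℝ) : bigO (fun _ : Euc n => (0 : ℝ)) τ := by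
  refine ⟨0, 0, fun x hx => ?_⟩
  simp

theorem bigO_add {n : ℕ} {f g : Euc n → ℝ} {τ : ℝ} (hf : bigO f τ) (hg : bigO g τ) :
    bigO (fun x => f x + g x) τ := by
  obtain ⟨C₁, R₁, h₁⟩ := hf
  obtain ⟨C₂, R₂, h₂⟩ := hg
  refine ⟨C₁ + C₂, max R₁ R₂, fun x hx => ?_⟩
  have e₁ := h₁ x (le_trans (le_max_left _ _) hx)
  have e₂ := h₂ x (le_trans (le_max_right _ _) hx)
  calc |f x + g x| ≤ |f x| + |g x| := abs_add_le _ _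
    _ ≤ C₁ * ‖x‖ ^ (-τ) + C₂ * ‖x‖ ^ (-τ) := add_le_add e₁ e₂
    _ = (C₁ + C₂) * ‖x‖ ^ (-τ) := by ring

theorem bigO_sum {n : ℕ} {ι : Type*} (s : Finset ι) (f : ι → Euc n → ℝ) {τ : ℝ}
    (hf : ∀ i ∈ s, bigO (f i) τ) : bigO (fun x => ∑ i ∈ s, f i x) τ := by
  classical
  induction s using Finset.induction_on with
  | empty => exact bigO_congr (fun x => by simp) (bigO_zero τ)
  | insert j s hnot ih =>
    have h1 := bigO_add (hf j (Finset.mem_insert_self j s))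
      (ih (fun i hi => hf i (Finset.mem_insert_of_mem hi)))
    exact bigO_congr (fun x => by rw [Finset.sum_insert hnot]) h1

theorem bigO_const_mul {n : ℕ} {f : Euc n → ℝ} {τ : ℝ} (c : ℝ) (hf : bigO f τ) :
    bigO (fun x => c * f x) τ := by
  obtain ⟨C, R, h⟩ := hf
  refine ⟨|c| * C, R, fun x hx => ?_⟩
  rw [abs_mul, mul_assoc]
  exact mul_le_mul_of_nonneg_left (h x hx) (abs_nonneg c)

theorem bigO_mul {n : ℕ} {f g : Euc n → ℝ} {σ τ : ℝ} (hf : bigO f σ) (hg : bigO g τ) :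
    bigO (fun x => f x * g x) (σ + τ) := by
  obtain ⟨C₁, R₁, h₁⟩ := hf
  obtain ⟨C₂, R₂, h₂⟩ := hg
  refine ⟨max C₁ 0 * max C₂ 0, max (max R₁ R₂) 1, fun x hx => ?_⟩
  have hx1 : (1 : ℝ) ≤ ‖x‖ := le_trans (le_max_right _ _) hx
  have hxpos : (0 : ℝ) < ‖x‖ := lt_of_lt_of_le one_pos hx1
  have e₁ : |f x| ≤ max C₁ 0 * ‖x‖ ^ (-σ) := le_trans
    (h₁ x (le_trans (le_trans (le_max_left _ _) (le_max_left _ _)) hx))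
    (mul_le_mul_of_nonneg_right (le_max_left _ _) (Real.rpow_nonneg hxpos.le _))
  have e₂ : |g x| ≤ max C₂ 0 * ‖x‖ ^ (-τ) := le_trans
    (h₂ x (le_trans (le_trans (le_max_right _ _) (le_max_left _ _)) hx))
    (mul_le_mul_of_nonneg_right (le_max_left _ _) (Real.rpow_nonneg hxpos.le _))
  calc |f x * g x| = |f x| * |g x| := abs_mul _ _
    _ ≤ (max C₁ 0 * ‖x‖ ^ (-σ)) * (max C₂ 0 * ‖x‖ ^ (-τ)) := by
        apply mul_le_mul e₁ e₂ (abs_nonneg _)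
        positivity
    _ = max C₁ 0 * max C₂ 0 * (‖x‖ ^ (-σ) * ‖x‖ ^ (-τ)) := by ring
    _ = max C₁ 0 * max C₂ 0 * ‖x‖ ^ (-(σ + τ)) := by
        rw [← Real.rpow_add hxpos]
        ring_nf

theorem bigO_exp_congr {n : ℕ} {f : Euc n → ℝ} {σ τ : ℝ} (h : σ = τ) (hf : bigO f σ) :
    bigO f τ := h ▸ hf

theorem sum_form_apply {n p : ℕ} {ι : Type*} [Fintype ι] (F : ι → Form n p)
    (x : Euc n) (w : Fin p → Fin n) :
    (∑ i, F i) x w = ∑ i, F i x w := by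
  rw [Finset.sum_apply, Finset.sum_apply]

theorem extd_sum_apply {n p : ℕ} {ι : Type*} [Fintype ι] (F : ι → Form n p)
    (hF : ∀ i (w : Fin p → Fin n) (x : Euc n), DifferentiableAt ℝ (fun y => F i y w) x)
    (x : Euc n) (w : Fin (p + 1) → Fin n) :
    extd (∑ i, F i) x w = ∑ i, extd (F i) x w := by
  rw [extd]
  have h1 : ∀ j : Fin (p + 1),
      pder (w j) (fun y => (∑ i, F i) y (w ∘ j.succAbove)) x
        = ∑ i, pder (w j) (fun y => F i y (w ∘ j.succAbove)) x := by
    intro j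
    rw [pder_congr (w j) (fun y => sum_form_apply F y (w ∘ j.succAbove)) x,
      pder_sum _ _ _ _ (fun i _ => hF i _ x)]
  calc ∑ j : Fin (p + 1), (-1 : ℝ) ^ (j : ℕ)
        * pder (w j) (fun y => (∑ i, F i) y (w ∘ j.succAbove)) x
      = ∑ j : Fin (p + 1), ∑ i, (-1 : ℝ) ^ (j : ℕ)
          * pder (w j) (fun y => F i y (w ∘ j.succAbove)) x := by
        apply Finset.sum_congr rfl
        intro j _
        rw [h1 j, Finset.mul_sum]
    _ = ∑ i, ∑ j : Fin (p + 1), (-1 : ℝ) ^ (j : ℕ)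
          * pder (w j) (fun y => F i y (w ∘ j.succAbove)) x := Finset.sum_comm
    _ = ∑ i, extd (F i) x w := rfl

theorem wedge_sub_left {n p q : ℕ} (f g : Form n p) (b : Form n q) (x : Euc n)
    (w : Fin (p + q) → Fin n) :
    wedge (f - g) b x w = wedge f b x w - wedge g b x w := by
  rw [wedge, wedge, wedge, ← mul_sub, ← Finset.sum_sub_distrib]
  congr 1
  apply Finset.sum_congr rfl
  intro σ _
  have hfg : (f - g) x (fun i => w (σ (Fin.castAdd q i)))
      = f x (fun i => w (σ (Fin.castAdd q i))) - g x (fun i => w (σ (Fin.castAdd q i))) := by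
    rw [Pi.sub_apply, Pi.sub_apply]
  rw [hfg]
  ring

theorem wedge_sum_left {n p q : ℕ} {ι : Type*} [Fintype ι] (f : ι → Form n p) (b : Form n q)
    (x : Euc n) (w : Fin (p + q) → Fin n) :
    wedge (∑ i, f i) b x w = ∑ i, wedge (f i) b x w := by
  rw [wedge]
  calc ((p.factorial * q.factorial : ℕ) : ℝ)⁻¹ * ∑ σ : Equiv.Perm (Fin (p + q)),
        ((Equiv.Perm.sign σ : ℤ) : ℝ)
          * (∑ i, f i) x (fun t => w (σ (Fin.castAdd q t)))
          * b x (fun t => w (σ (Fin.natAdd p t)))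
      = ((p.factorial * q.factorial : ℕ) : ℝ)⁻¹ * ∑ σ : Equiv.Perm (Fin (p + q)), ∑ i,
          ((Equiv.Perm.sign σ : ℤ) : ℝ)
            * f i x (fun t => w (σ (Fin.castAdd q t)))
            * b x (fun t => w (σ (Fin.natAdd p t))) := by
        congr 1
        apply Finset.sum_congr rfl
        intro σ _
        rw [sum_form_apply, Finset.mul_sum, Finset.sum_mul]
    _ = ∑ i, wedge (f i) b x w := by
        rw [Finset.sum_comm, Finset.mul_sum]
        apply Finset.sum_congr rfl
        intro i _
        rw [wedge]

theorem bigO_pair {n : ℕ} (a a' : Form n 1) (τ₁ τ₂ : ℝ)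
    (ha : ∀ w : Fin 1 → Fin n, bigO (fun x => a x w) τ₁)
    (ha' : ∀ w : Fin 1 → Fin n, bigO (fun x => a' x w) τ₂)
    (A : Fin (1 + 1) → Fin n) : bigO (fun x => wedge a a' x A) (τ₁ + τ₂) := by
  have hrfl : (fun x => wedge a a' x A)
      = fun x => ((Nat.factorial 1 * Nat.factorial 1 : ℕ) : ℝ)⁻¹
        * ∑ σ : Equiv.Perm (Fin (1 + 1)), ((Equiv.Perm.sign σ : ℤ) : ℝ)
          * a x (fun t => A (σ (Fin.castAdd 1 t)))
          * a' x (fun t => A (σ (Fin.natAdd 1 t))) := rfl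
  rw [hrfl]
  apply bigO_const_mul
  apply bigO_sum
  intro σ _
  apply bigO_congr (f := fun x => ((Equiv.Perm.sign σ : ℤ) : ℝ)
    * (a x (fun t => A (σ (Fin.castAdd 1 t))) * a' x (fun t => A (σ (Fin.natAdd 1 t)))))
    (fun x => by ring)
  exact bigO_const_mul _ (bigO_mul (ha _) (ha' _))

theorem bigO_triple {n m : ℕ} (a a' : Form n 1) (b : Form n m) (τ₁ τ₂ τ₃ : ℝ)
    (ha : ∀ w : Fin 1 → Fin n, bigO (fun x => a x w) τ₁)
    (ha' : ∀ w : Fin 1 → Fin n, bigO (fun x => a' x w) τ₂)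
    (hb : ∀ w : Fin m → Fin n, bigO (fun x => b x w) τ₃)
    (w : Fin (1 + 1 + m) → Fin n) :
    bigO (fun x => wedge (wedge a a') b x w) (τ₁ + τ₂ + τ₃) := by
  have hrfl : (fun x => wedge (wedge a a') b x w)
      = fun x => (((1 + 1).factorial * Nat.factorial m : ℕ) : ℝ)⁻¹
        * ∑ σ : Equiv.Perm (Fin (1 + 1 + m)), ((Equiv.Perm.sign σ : ℤ) : ℝ)
          * wedge a a' x (fun t => w (σ (Fin.castAdd m t)))
          * b x (fun t => w (σ (Fin.natAdd (1 + 1) t))) := rfl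
  rw [hrfl]
  apply bigO_const_mul
  apply bigO_sum
  intro σ _
  apply bigO_congr (f := fun x => ((Equiv.Perm.sign σ : ℤ) : ℝ)
    * (wedge a a' x (fun t => w (σ (Fin.castAdd m t)))
      * b x (fun t => w (σ (Fin.natAdd (1 + 1) t)))))
    (fun x => by ring)
  exact bigO_const_mul _ (bigO_mul (bigO_pair (n := n) a a' τ₁ τ₂ ha ha' _) (hb _))


set_option maxHeartbeats 1000000 in
/-- On an asymptotically flat manifold `(M^n, g)` of decay order `τ` (here `n = m + 2`),
in an adapted orthonormal frame with connection 1-forms `ωc = O(r^{−τ−1})`, curvature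
2-forms `Ω_{αβ} = dω_{αβ} − ω_{αγ} ∧ ω_{γβ}`, and the `(n−2)`-forms
`*Q^{αβ}` (the Hodge duals of `Q^{αβ} = P^{αβγδ}_{(k)} ω_γ ∧ ω_δ`, built from `k − 1`
copies of the curvature, so `*Q^{αβ} = O(r^{−(k−1)(τ+2)})`) which are co-closed
(`d*Q^{αβ} = 0`, equivalently `d(*Q^{αβ}) = 0`) and satisfy
`Ω_{αβ} ∧ (*Q^{αβ}) = L_k * 1`:  one has
`d(ω_{α₁α₂} ∧ (*Q^{α₁α₂})) = L_k * 1 + O(r^{−(k+1)τ−2k})`, and in particular the error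
term `ω_{α₁β} ∧ ω_{βα₂} ∧ (*Q^{α₁α₂})` has pointwise components `O(r^{−(k+1)τ−2k})`. -/
theorem dOmegaStarQ_eq_Lk {m k : ℕ} (hk : 1 ≤ k) (τ : ℝ) (hτ : 0 < τ)
    (ωc : Fin (m + 2) → Fin (m + 2) → Form (m + 2) 1)
    (Ω : Fin (m + 2) → Fin (m + 2) → Form (m + 2) 2)
    (StarQ : Fin (m + 2) → Fin (m + 2) → Form (m + 2) m)
    (LkVol : Form (m + 2) (m + 2))
    (hsmoothωc : ∀ (α β : Fin (m + 2)) (v : Fin 1 → Fin (m + 2)),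
      ContDiff ℝ (⊤ : ℕ∞) (fun x => ωc α β x v))
    (hsmoothQ : ∀ (α β : Fin (m + 2)) (v : Fin m → Fin (m + 2)),
      ContDiff ℝ (⊤ : ℕ∞) (fun x => StarQ α β x v))
    (hΩ : ∀ α β, Ω α β = extd (ωc α β)
      - ∑ γ : Fin (m + 2), wedge (ωc α γ) (ωc γ β))
    -- co-closedness `d*Q^{αβ} = 0`, i.e. `d(*Q^{αβ}) = 0`
    (hcoclosed : ∀ α β, extd (StarQ α β) = 0)
    -- `L_k * 1 = Ω_{α₁α₂} ∧ (*Q^{α₁α₂})`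
    (hLvol : castForm (Nat.add_comm 2 m)
      (∑ α : Fin (m + 2), ∑ β : Fin (m + 2), wedge (Ω α β) (StarQ α β)) = LkVol)
    -- decay of the connection forms: `ωc = O(r^{−τ−1})`
    (hωcdecay : ∀ (α β : Fin (m + 2)) (i : Fin (m + 2)),
      bigO (fun x => ωc α β x ![i]) (τ + 1))
    -- decay of `*Q` (built from `k − 1` copies of the curvature)
    (hQdecay : ∀ (α β : Fin (m + 2)) (v : Fin m → Fin (m + 2)),
      bigO (fun x => StarQ α β x v) (((k : ℝ) - 1) * (τ + 2))) :
    (∀ v : Fin (m + 2) → Fin (m + 2),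
      bigO (fun x =>
          castForm (by omega : 1 + m + 1 = m + 2)
            (extd (∑ α : Fin (m + 2), ∑ β : Fin (m + 2), wedge (ωc α β) (StarQ α β))) x v
        - LkVol x v) (((k : ℝ) + 1) * τ + 2 * k))
    ∧
    (∀ v : Fin (m + 2) → Fin (m + 2),
      bigO (fun x =>
        castForm (by omega : 1 + 1 + m = m + 2)
          (∑ α₁ : Fin (m + 2), ∑ α₂ : Fin (m + 2), ∑ β : Fin (m + 2),
            wedge (wedge (ωc α₁ β) (ωc β α₂)) (StarQ α₁ α₂)) x v)
        (((k : ℝ) + 1) * τ + 2 * k)) := by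
    classical
  have hA : 1 + m + 1 = m + 2 := by omega
  have hC : 2 + m = m + 2 := by omega
  have hB : 1 + 1 + m = m + 2 := by omega
  have hωc' : ∀ (α β : Fin (m + 2)) (w : Fin 1 → Fin (m + 2)),
      bigO (fun x => ωc α β x w) (τ + 1) := by
    intro α β w
    have hw : ![w 0] = w := by
      funext t
      have ht : t = 0 := Subsingleton.elim t 0
      subst ht
      simp
    exact hw ▸ (hωcdecay α β (w 0))
  -- the bigO bound on the error term
  have hbig : ∀ v : Fin (m + 2) → Fin (m + 2),
      bigO (fun x =>
        castForm hB
          (∑ α₁ : Fin (m + 2), ∑ α₂ : Fin (m + 2), ∑ β : Fin (m + 2),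
            wedge (wedge (ωc α₁ β) (ωc β α₂)) (StarQ α₁ α₂)) x v)
        (((k : ℝ) + 1) * τ + 2 * k) := by
    intro v
    have hpt : ∀ x : Euc (m + 2),
        (∑ α₁ : Fin (m + 2), ∑ α₂ : Fin (m + 2), ∑ β : Fin (m + 2),
          (fun x => wedge (wedge (ωc α₁ β) (ωc β α₂)) (StarQ α₁ α₂) x (v ∘ Fin.cast hB)) x)
        = castForm hB
            (∑ α₁ : Fin (m + 2), ∑ α₂ : Fin (m + 2), ∑ β : Fin (m + 2),
              wedge (wedge (ωc α₁ β) (ωc β α₂)) (StarQ α₁ α₂)) x v := by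
      intro x
      rw [castForm]
      simp [Finset.sum_apply]
    apply bigO_congr hpt
    apply bigO_sum
    intro α₁ _
    apply bigO_sum
    intro α₂ _
    apply bigO_sum
    intro β _
    apply bigO_exp_congr
      (show (τ + 1) + (τ + 1) + (((k : ℝ) - 1) * (τ + 2)) = ((k : ℝ) + 1) * τ + 2 * k by ring)
    exact bigO_triple _ _ _ _ _ _ (hωc' α₁ β) (hωc' β α₂) (hQdecay α₁ α₂) _
  -- the pointwise algebraic identity
  have main : ∀ (v : Fin (m + 2) → Fin (m + 2)) (x : Euc (m + 2)),
      castForm hA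
          (extd (∑ α : Fin (m + 2), ∑ β : Fin (m + 2), wedge (ωc α β) (StarQ α β))) x v
        - LkVol x v
      = castForm hB
          (∑ α₁ : Fin (m + 2), ∑ α₂ : Fin (m + 2), ∑ β : Fin (m + 2),
            wedge (wedge (ωc α₁ β) (ωc β α₂)) (StarQ α₁ α₂)) x v := by
    intro v x
    have e1 : castForm hA
        (extd (∑ α : Fin (m + 2), ∑ β : Fin (m + 2), wedge (ωc α β) (StarQ α β))) x v
        = ∑ p : Fin (m + 2) × Fin (m + 2),
            extd (wedge (ωc p.1 p.2) (StarQ p.1 p.2)) x (v ∘ Fin.cast hA) := by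
      rw [castForm]
      rw [show (∑ α : Fin (m + 2), ∑ β : Fin (m + 2), wedge (ωc α β) (StarQ α β))
          = ∑ p : Fin (m + 2) × Fin (m + 2), wedge (ωc p.1 p.2) (StarQ p.1 p.2)
          from (Fintype.sum_prod_type' _).symm]
      rw [extd_sum_apply _
        (fun p w x => diffAt_wedge _ _ (hsmoothωc p.1 p.2) (hsmoothQ p.1 p.2) w x)]
    have e2 : ∀ p : Fin (m + 2) × Fin (m + 2),
        extd (wedge (ωc p.1 p.2) (StarQ p.1 p.2)) x (v ∘ Fin.cast hA)
          = castForm hC (wedge (extd (ωc p.1 p.2)) (StarQ p.1 p.2)) x v := by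
      intro p
      exact key (ωc p.1 p.2) (StarQ p.1 p.2) (hsmoothωc p.1 p.2) (hsmoothQ p.1 p.2)
        (hcoclosed p.1 p.2) x v hA hC
    have e3 : LkVol x v = ∑ p : Fin (m + 2) × Fin (m + 2),
        wedge (Ω p.1 p.2) (StarQ p.1 p.2) x (v ∘ Fin.cast hC) := by
      rw [← hLvol, castForm]
      rw [show (∑ α : Fin (m + 2), ∑ β : Fin (m + 2), wedge (Ω α β) (StarQ α β))
          = ∑ p : Fin (m + 2) × Fin (m + 2), wedge (Ω p.1 p.2) (StarQ p.1 p.2)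
          from (Fintype.sum_prod_type' _).symm]
      rw [sum_form_apply]
    have e4 : ∀ p : Fin (m + 2) × Fin (m + 2),
        wedge (Ω p.1 p.2) (StarQ p.1 p.2) x (v ∘ Fin.cast hC)
          = castForm hC (wedge (extd (ωc p.1 p.2)) (StarQ p.1 p.2)) x v
            - ∑ γ : Fin (m + 2),
                wedge (wedge (ωc p.1 γ) (ωc γ p.2)) (StarQ p.1 p.2) x (v ∘ Fin.cast hC) := by
      intro p
      rw [hΩ p.1 p.2, wedge_sub_left, wedge_sum_left]
      rfl
    rw [e1, Finset.sum_congr rfl (fun p _ => e2 p), e3,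
      Finset.sum_congr rfl (fun p _ => e4 p), Finset.sum_sub_distrib]
    have e5 : castForm hB
        (∑ α₁ : Fin (m + 2), ∑ α₂ : Fin (m + 2), ∑ β : Fin (m + 2),
          wedge (wedge (ωc α₁ β) (ωc β α₂)) (StarQ α₁ α₂)) x v
        = ∑ p : Fin (m + 2) × Fin (m + 2), ∑ γ : Fin (m + 2),
            wedge (wedge (ωc p.1 γ) (ωc γ p.2)) (StarQ p.1 p.2) x (v ∘ Fin.cast hC) := by
      rw [castForm]
      rw [show (∑ α₁ : Fin (m + 2), ∑ α₂ : Fin (m + 2), ∑ β : Fin (m + 2),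
            wedge (wedge (ωc α₁ β) (ωc β α₂)) (StarQ α₁ α₂))
          = ∑ p : Fin (m + 2) × Fin (m + 2), ∑ β : Fin (m + 2),
              wedge (wedge (ωc p.1 β) (ωc β p.2)) (StarQ p.1 p.2)
          from (Fintype.sum_prod_type' _).symm]
      rw [sum_form_apply]
      apply Finset.sum_congr rfl
      intro p _
      rw [sum_form_apply]
    rw [e5]
    ring
  constructor
  · intro v
    exact bigO_congr (fun x => (main v x).symm) (hbig v)
  · intro v
    exact hbig v
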